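/- (Lemma 2 of the paper: the differential of φ inverts the differential of ψ.) Let E = EuclideanSpace ℝ (Fin n), let y = (y₀, yᵣ) ∈ ℝ × E with y₀ > 0, and let v ∈ E. Define w := Dφ_y(v) = (⟪yᵣ, v⟫*(1 + y₀), (1 + y₀) • v + ⟪yᵣ, v⟫ • yᵣ) with components w = (w₀, wᵣ). Then (1/(1 + y₀)) • (wᵣ - (w₀/(1 + y₀)) • yᵣ) = v; that is, the differential of ψ applied to Dφ_y(v) recovers v. -/

import Mathlib

open RealInnerProductSpace

/-- The differential at `y = φ(x)` of the transition map `φ` from the Poincaré ball to the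
Lorentz model, applied to a tangent vector `v`. -/
noncomputable def Dphi {n : ℕ} (y : ℝ × EuclideanSpace ℝ (Fin n))
    (v : EuclideanSpace ℝ (Fin n)) : ℝ × EuclideanSpace ℝ (Fin n) :=
  (⟪y.2, v⟫ * (1 + y.1), (1 + y.1) • v + ⟪y.2, v⟫ • y.2)

theorem one_div_smul_add_smul_sub_mul_div_smul {K M : Type*} [Field K] [AddCommGroup M]
    [Module K M] {c : K} (hc : c ≠ 0) (a : K) (u v : M) :
    (1 / c) • ((c • v + a • u) - (a * c / c) • u) = v := by
  rw [mul_div_cancel_right₀ a hc, add_sub_cancel_right, smul_smul, one_div_mul_cancel hc,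
    one_smul]

theorem Dpsi_Dphi (n : ℕ) (y : ℝ × EuclideanSpace ℝ (Fin n)) (hy : 0 < y.1)
    (v : EuclideanSpace ℝ (Fin n)) :
    (1 / (1 + y.1)) • ((Dphi y v).2 - ((Dphi y v).1 / (1 + y.1)) • y.2) = v :=
  one_div_smul_add_smul_sub_mul_div_smul (by positivity) _ _ _
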